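/- Conversely, consider a finite control system with transition f and output h, and a T-periodic reference output trajectory y_r : ℕ → Fin P. If there exists an initial state x₁ and an infinite input sequence producing an infinite state trajectory x with x(1) = x₁ and h(x(t)) = y_r(t) for all t ≥ 1, then there exists a nonempty family of length-T state trajectories satisfying conditions (C1) and (C2). -/

import Mathlib

/-!
Cut the infinite trajectory `z` into consecutive blocks `z (kT + 1), …, z (kT + T)`, one for
each `k : ℕ`. By periodicity every block carries the output `y_r(1), …, y_r(T)`, consecutive
states inside a block are linked because they are linked in `z`, and the last state of block `k`
is linked to the first state of block `k + 1`, so the family of all blocks is closed.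
-/

variable {α : Type*}

def trajectoryBlock (z : ℕ → α) (T k : ℕ) (t : Fin T) : α :=
  z (k * T + t + 1)

section Blocks

variable {z : ℕ → α} {T : ℕ}

theorem trajectoryBlock_map_eq {β : Type*} {g : α → β} {y : ℕ → β}
    (hper : Function.Periodic y T) (hz : ∀ t, 1 ≤ t → g (z t) = y t) (k : ℕ) (t : Fin T) :
    g (trajectoryBlock z T k t) = y (t + 1) := by
  rw [trajectoryBlock, hz _ (by omega), add_assoc, add_comm]
  exact hper.nat_mul k _

theorem trajectoryBlock_rel_succ {R : α → α → Prop} (hz : ∀ t, 1 ≤ t → R (z t) (z (t + 1)))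
    (k t : ℕ) (ht : t + 1 < T) :
    R (trajectoryBlock z T k ⟨t, Nat.lt_of_succ_lt ht⟩) (trajectoryBlock z T k ⟨t + 1, ht⟩) :=
  hz (k * T + t + 1) (by omega)

theorem trajectoryBlock_rel_last {R : α → α → Prop} (hz : ∀ t, 1 ≤ t → R (z t) (z (t + 1)))
    (hT : 1 ≤ T) (k : ℕ) :
    R (trajectoryBlock z T k ⟨T - 1, Nat.sub_one_lt_of_lt hT⟩) (trajectoryBlock z T (k + 1) ⟨0, hT⟩) := by
  have hidx : k * T + (T - 1) + 1 + 1 = (k + 1) * T + 0 + 1 := by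
    obtain ⟨n, rfl⟩ := Nat.exists_eq_add_of_le' hT
    simp only [Nat.add_sub_cancel]
    ring
  have := hz (k * T + (T - 1) + 1) (by omega)
  rwa [hidx] at this

end Blocks

theorem stmt_7 {N M P T : ℕ} (hT : 1 ≤ T)
    (f : Fin M → Fin N → Fin N) (h : Fin N → Fin P)
    (yr : ℕ → Fin P) (hper : ∀ t, yr (t + T) = yr t)
    (z : ℕ → Fin N)
    (hzout : ∀ t : ℕ, 1 ≤ t → h (z t) = yr t)
    (hzcon : ∀ t : ℕ, 1 ≤ t → ∃ i : Fin M, f i (z t) = z (t + 1)) :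
    ∃ (L : Type) (_ : Nonempty L) (xfam : L → Fin T → Fin N),
      (∀ (ℓ : L) (t : Fin T), h (xfam ℓ t) = yr ((t : ℕ) + 1)) ∧
      (∀ (ℓ : L) (t : ℕ) (ht : t + 1 < T),
        ∃ i : Fin M, f i (xfam ℓ ⟨t, by omega⟩) = xfam ℓ ⟨t + 1, ht⟩) ∧
      (∀ ℓ : L, ∃ (ℓ' : L) (i : Fin M),
        f i (xfam ℓ ⟨T - 1, by omega⟩) = xfam ℓ' ⟨0, hT⟩) := by
  let Step (a b : Fin N) : Prop := ∃ i, f i a = b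
  exact ⟨ℕ, ⟨0⟩, trajectoryBlock z T,
    trajectoryBlock_map_eq hper hzout,
    trajectoryBlock_rel_succ (R := Step) hzcon,
    fun k => ⟨k + 1, trajectoryBlock_rel_last (R := Step) hzcon hT k⟩⟩
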